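/- The digraph D(6) is strongly connected and satisfies max{d(x), d(y)} ≥ 5 for every dominating pair of vertices {x, y}, but its underlying undirected graph is not 2-connected. (Hence the bound 2a ≥ 8 in the 2-connectivity lemma is sharp.) -/

import Mathlib

open Finset

variable {V : Type*}

/-- Total degree (out-degree plus in-degree) of `x` in the digraph with arc relation `A`. -/
noncomputable def deg (A : V → V → Prop) (x : V) : ℕ :=
  Set.ncard {y | A x y} + Set.ncard {y | A y x}

/-- The digraph with arc relation `A` is strongly connected. -/
def StrongConn (A : V → V → Prop) : Prop :=
  ∀ u v : V, Relation.ReflTransGen A u v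

/-- `{x, y}` is a dominating pair: distinct vertices with a common out-neighbour. -/
def DomPair (A : V → V → Prop) (x y : V) : Prop :=
  x ≠ y ∧ ∃ z, A x z ∧ A y z

/-- `X, Y` is a bipartition of the digraph `A`: the two parts partition the vertex
set and every arc joins the two parts. -/
def IsBipartition (A : V → V → Prop) (X Y : Set V) : Prop :=
  Disjoint X Y ∧ X ∪ Y = Set.univ ∧
    ∀ u v, A u v → (u ∈ X ∧ v ∈ Y) ∨ (u ∈ Y ∧ v ∈ X)

/-- The underlying undirected graph of the digraph `A`. -/
def UG (A : V → V → Prop) : SimpleGraph V where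
  Adj u v := u ≠ v ∧ (A u v ∨ A v u)
  symm := ⟨by intro u v h; exact ⟨h.1.symm, h.2.symm⟩⟩
  loopless := ⟨by intro v h; exact h.1 rfl⟩

/-- A graph on a finite vertex set is 2-connected if it has at least 3 vertices and
deleting any single vertex leaves a connected graph. -/
def TwoConnected [Fintype V] (G : SimpleGraph V) : Prop :=
  3 ≤ Fintype.card V ∧ ∀ v : V, (G.induce {u : V | u ≠ v}).Connected

/-- The arcs of the digraph `D(6)`; vertices `0,1,2` are `x₁,x₂,x₃` and `3,4,5`
are `y₁,y₂,y₃`. -/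
def D6Arcs : List (Fin 6 × Fin 6) :=
  [(0,3), (3,0), (1,4), (4,1), (2,5), (5,2),
   (0,5), (5,0), (1,5), (5,1),
   (1,3), (0,4)]

/-- The digraph `D(6)` of Example 2. -/
def D6 (u v : Fin 6) : Prop := (u, v) ∈ D6Arcs

section Digraph

variable {V : Type*} (A : V → V → Prop)

theorem deg_eq_card_filter [Fintype V] [DecidableRel A] (x : V) :
    deg A x = #{y | A x y} + #{y | A y x} := by
  simp only [deg, ← Set.ncard_coe_finset, coe_filter, mem_univ, true_and]

variable {A}

theorem strongConn_of_hub {c : V} (hto : ∀ u, Relation.ReflTransGen A u c)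
    (hfrom : ∀ v, Relation.ReflTransGen A c v) : StrongConn A :=
  fun u v => (hto u).trans (hfrom v)

end Digraph

/-- A vertex whose only neighbour is `c` is isolated once `c` is deleted, so `c` is a
cut vertex. -/
theorem not_twoConnected_of_adj_eq {V : Type*} [Fintype V] {G : SimpleGraph V} {w c : V}
    (hwc : w ≠ c) (hw : ∀ v, G.Adj w v → v = c) : ¬ TwoConnected G := by
  classical
  rintro ⟨hcard, hconn⟩
  obtain ⟨u, -, hu⟩ : ∃ u ∈ univ, u ∉ ({w, c} : Finset V) :=
    exists_mem_notMem_of_card_lt_card <| (card_le_two).trans_lt <| by rw [card_univ]; omega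
  simp only [mem_insert, mem_singleton, not_or] at hu
  have : Nontrivial {v : V | v ≠ c} :=
    ⟨⟨w, hwc⟩, ⟨u, hu.2⟩, fun h => hu.1 (congrArg Subtype.val h).symm⟩
  obtain ⟨v, hv⟩ := (hconn c).preconnected.exists_adj_of_nontrivial ⟨w, hwc⟩
  exact v.2 (hw v hv)

instance : DecidableRel D6 := fun u v => inferInstanceAs (Decidable ((u, v) ∈ D6Arcs))

theorem D6_reachable_to_y₃ (u : Fin 6) : Relation.ReflTransGen D6 u 5 := by
  have : ∀ u : Fin 6, u = 5 ∨ D6 u 5 ∨ ∃ w, D6 u w ∧ D6 w 5 := by decide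
  rcases this u with rfl | h | ⟨w, huw, hw⟩
  · rfl
  · exact .single h
  · exact .head huw (.single hw)

theorem D6_reachable_from_y₃ (v : Fin 6) : Relation.ReflTransGen D6 5 v := by
  have : ∀ v : Fin 6, v = 5 ∨ D6 5 v ∨ ∃ w, D6 5 w ∧ D6 w v := by decide
  rcases this v with rfl | h | ⟨w, h5w, hw⟩
  · rfl
  · exact .single h
  · exact .head h5w (.single hw)

/-- The vertices of degree below `5` are `x₃, y₁, y₂`, and no two of them share an
out-neighbour. -/
theorem D6_not_domPair_of_deg_lt_five :
    ∀ x y : Fin 6, deg D6 x < 5 → deg D6 y < 5 → ¬ DomPair D6 x y := by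
  simp only [deg_eq_card_filter, DomPair]
  decide

theorem D6_adj_x₃_eq_y₃ : ∀ v : Fin 6, (UG D6).Adj 2 v → v = 5 := by
  simp only [UG]
  decide

/-- The digraph `D(6)` is strongly connected and satisfies `max {d(x), d(y)} ≥ 5` for
every dominating pair, but its underlying undirected graph is not 2-connected. -/
theorem stmt9 :
    StrongConn D6 ∧
    (∀ x y : Fin 6, DomPair D6 x y → 5 ≤ max (deg D6 x) (deg D6 y)) ∧
    ¬ TwoConnected (UG D6) := by
  refine ⟨strongConn_of_hub D6_reachable_to_y₃ D6_reachable_from_y₃, ?_,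
    not_twoConnected_of_adj_eq (by decide) D6_adj_x₃_eq_y₃⟩
  intro x y hxy
  by_contra! hlt
  exact D6_not_domPair_of_deg_lt_five x y (le_max_left _ _ |>.trans_lt hlt)
    (le_max_right _ _ |>.trans_lt hlt) hxy
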